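/- arXiv:1409.0138 — 5 statements merged into one kernel-verified Lean document; each statement's English description precedes it below -/
import Mathlib

section
/- Let k : [0, ∞) → ℝ be continuous with k(s) ≤ 0 for all s, and let F be the solution of F'' + kF = 0 with F(0) = 0, F'(0) = 1. Then for every s > 0 one has F(s) > 0 and s·F'(s) ≥ F(s) (equivalently, sF'(s)/F(s) ≥ 1). -/
open Set

/-!
Wherever `F ≥ 0`, the equation gives `F'' = -k F ≥ 0`, so `F` is convex. If `F'` vanished
somewhere, take the first such point `t₀`: on `[0, t₀]` we have `F' ≥ 0`, hence `F ≥ F 0 = 0`,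
hence `F` is convex there and `F' t₀ ≥ F' 0 = 1`, a contradiction. So `F ≥ 0` and `F` is convex
on `[0, ∞)`, and the two claims are the tangent-line bounds `s F'(0) ≤ F(s) ≤ s F'(s)` of a
convex function vanishing at `0`.
-/

lemma hasDerivWithinAt_interior_of_subset {f f' : ℝ → ℝ} {S D : Set ℝ} (hDS : D ⊆ S)
    (hf : ∀ x ∈ S, HasDerivWithinAt f (f' x) S x) :
    ∀ x ∈ interior D, HasDerivWithinAt f (f' x) (interior D) x :=
  fun x hx ↦ (hf x (hDS (interior_subset hx))).mono (interior_subset.trans hDS)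

lemma nonneg_of_hasDerivWithinAt_nonneg {f f' : ℝ → ℝ} {S D : Set ℝ} (hD : Convex ℝ D)
    (hDS : D ⊆ S) (hf : ∀ x ∈ S, HasDerivWithinAt f (f' x) S x) (h0 : 0 ∈ D) (hf0 : f 0 = 0)
    (hf' : ∀ x ∈ interior D, 0 ≤ f' x) (hD0 : ∀ x ∈ D, 0 ≤ x) :
    ∀ x ∈ D, 0 ≤ f x := by
  have hmono : MonotoneOn f D :=
    monotoneOn_of_hasDerivWithinAt_nonneg hD
      (fun x hx ↦ (hf x (hDS hx)).continuousWithinAt.mono hDS)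
      (hasDerivWithinAt_interior_of_subset hDS hf) hf'
  exact fun x hx ↦ hf0 ▸ hmono h0 hx (hD0 x hx)

lemma ConvexOn.mul_deriv_zero_le_and_le_mul_deriv {f f' : ℝ → ℝ} {S : Set ℝ}
    (hfc : ConvexOn ℝ S f) (hf : ∀ x ∈ S, HasDerivWithinAt f (f' x) S x) (h0 : 0 ∈ S)
    (hf0 : f 0 = 0) {s : ℝ} (hsS : s ∈ S) (hs : 0 < s) :
    s * f' 0 ≤ f s ∧ f s ≤ s * f' s := by
  have hslope : slope f 0 s = f s / s := by simp [slope_def_field, hf0]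
  have hleft := hfc.le_slope_of_hasDerivWithinAt h0 hsS hs (hf 0 h0)
  have hright := hfc.slope_le_of_hasDerivWithinAt h0 hsS hs (hf s hsS)
  rw [hslope] at hleft hright
  exact ⟨by rwa [le_div_iff₀ hs, mul_comm] at hleft, by rwa [div_le_iff₀ hs, mul_comm] at hright⟩

lemma convexOn_of_jacobi {k F F' F'' : ℝ → ℝ} {S D : Set ℝ} (hD : Convex ℝ D) (hDS : D ⊆ S)
    (hk : ∀ s ∈ S, k s ≤ 0) (hF' : ∀ s ∈ S, HasDerivWithinAt F (F' s) S s)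
    (hF'' : ∀ s ∈ S, HasDerivWithinAt F' (F'' s) S s) (hODE : ∀ s ∈ S, F'' s + k s * F s = 0)
    (hF : ∀ s ∈ D, 0 ≤ F s) : ConvexOn ℝ D F := by
  refine convexOn_of_hasDerivWithinAt2_nonneg hD
    (fun s hs ↦ (hF' s (hDS hs)).continuousWithinAt.mono hDS)
    (hasDerivWithinAt_interior_of_subset hDS hF') (hasDerivWithinAt_interior_of_subset hDS hF'')
    fun s hs ↦ ?_
  have hsD := interior_subset hs
  linarith [hODE s (hDS hsD), mul_nonpos_of_nonpos_of_nonneg (hk s (hDS hsD)) (hF s hsD)]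

lemma deriv_pos_of_jacobi {k F F' F'' : ℝ → ℝ} (hk : ∀ s ∈ Ici (0 : ℝ), k s ≤ 0)
    (hF' : ∀ s ∈ Ici (0 : ℝ), HasDerivWithinAt F (F' s) (Ici 0) s)
    (hF'' : ∀ s ∈ Ici (0 : ℝ), HasDerivWithinAt F' (F'' s) (Ici 0) s)
    (hODE : ∀ s ∈ Ici (0 : ℝ), F'' s + k s * F s = 0) (hF0 : F 0 = 0) (hF'0 : 0 < F' 0) :
    ∀ b ∈ Ici (0 : ℝ), 0 < F' b := by
  by_contra! ⟨b, hb, hFb⟩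
  obtain ⟨t₀, ⟨⟨ht₀, ht₀b⟩, hFt₀ : F' t₀ ≤ 0⟩, hleast⟩ :
      ∃ t₀, IsLeast (Icc 0 b ∩ F' ⁻¹' Iic 0) t₀ := by
    have hclosed : IsClosed (Icc 0 b ∩ F' ⁻¹' Iic 0) :=
      (ContinuousOn.mono (fun s hs ↦ (hF'' s hs).continuousWithinAt)
        Icc_subset_Ici_self).preimage_isClosed_of_isClosed isClosed_Icc isClosed_Iic
    exact (isCompact_Icc.of_isClosed_subset hclosed inter_subset_left).exists_isLeast
      ⟨b, ⟨hb, le_rfl⟩, hFb⟩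
  have ht₀pos : 0 < t₀ := ht₀.lt_of_ne (by rintro rfl; linarith)
  have hF'_nonneg : ∀ s ∈ interior (Icc 0 t₀), 0 ≤ F' s := by
    rw [interior_Icc]
    intro s hs
    by_contra! hFs
    exact hs.2.not_ge (hleast ⟨⟨hs.1.le, hs.2.le.trans ht₀b⟩, hFs.le⟩)
  have hsub : Icc 0 t₀ ⊆ Ici 0 := Icc_subset_Ici_self
  have h0 : (0 : ℝ) ∈ Icc 0 t₀ := left_mem_Icc.mpr ht₀
  have ht₀mem : t₀ ∈ Icc 0 t₀ := right_mem_Icc.mpr ht₀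
  have hF_nonneg := nonneg_of_hasDerivWithinAt_nonneg (convex_Icc 0 t₀) hsub hF' h0 hF0
    hF'_nonneg fun s hs ↦ hs.1
  have hconv := convexOn_of_jacobi (convex_Icc 0 t₀) hsub hk hF' hF'' hODE hF_nonneg
  have hderiv : ∀ s ∈ Icc 0 t₀, HasDerivWithinAt F (F' s) (Icc 0 t₀) s :=
    fun s hs ↦ (hF' s (hsub hs)).mono hsub
  have hleft := hconv.le_slope_of_hasDerivWithinAt h0 ht₀mem ht₀pos (hderiv 0 h0)
  have hright := hconv.slope_le_of_hasDerivWithinAt h0 ht₀mem ht₀pos (hderiv t₀ ht₀mem)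
  linarith

theorem stmt_0_general (k F F' F'' : ℝ → ℝ)
    (hk_nonpos : ∀ s ∈ Set.Ici (0 : ℝ), k s ≤ 0)
    (hF' : ∀ s ∈ Set.Ici (0 : ℝ), HasDerivWithinAt F (F' s) (Set.Ici 0) s)
    (hF'' : ∀ s ∈ Set.Ici (0 : ℝ), HasDerivWithinAt F' (F'' s) (Set.Ici 0) s)
    (hODE : ∀ s ∈ Set.Ici (0 : ℝ), F'' s + k s * F s = 0)
    (hF0 : F 0 = 0) (hF'0 : F' 0 = 1) :
    ∀ s > (0 : ℝ), 0 < F s ∧ F s ≤ s * F' s := by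
  have hF'_pos := deriv_pos_of_jacobi hk_nonpos hF' hF'' hODE hF0 (hF'0 ▸ one_pos)
  have hF_nonneg := nonneg_of_hasDerivWithinAt_nonneg (convex_Ici 0) subset_rfl hF'
    self_mem_Ici hF0 (fun s hs ↦ (hF'_pos s (interior_subset hs)).le) fun s hs ↦ hs
  have hconv := convexOn_of_jacobi (convex_Ici 0) subset_rfl hk_nonpos hF' hF'' hODE hF_nonneg
  intro s hs
  obtain ⟨hlower, hupper⟩ :=
    hconv.mul_deriv_zero_le_and_le_mul_deriv hF' self_mem_Ici hF0 hs.le hs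
  rw [hF'0, mul_one] at hlower
  exact ⟨hs.trans_le hlower, hupper⟩

/-- Lemma 1 (i), first part: if `k ≤ 0` is continuous on `[0, ∞)` and `F` solves
`F'' + k F = 0`, `F(0) = 0`, `F'(0) = 1`, then for `s > 0` one has `F(s) > 0` and
`s F'(s) ≥ F(s)`. -/
theorem stmt_0 (k F F' F'' : ℝ → ℝ)
    (hk_cont : ContinuousOn k (Set.Ici 0))
    (hk_nonpos : ∀ s ∈ Set.Ici (0 : ℝ), k s ≤ 0)
    (hF' : ∀ s ∈ Set.Ici (0 : ℝ), HasDerivWithinAt F (F' s) (Set.Ici 0) s)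
    (hF'' : ∀ s ∈ Set.Ici (0 : ℝ), HasDerivWithinAt F' (F'' s) (Set.Ici 0) s)
    (hF''_cont : ContinuousOn F'' (Set.Ici 0))
    (hODE : ∀ s ∈ Set.Ici (0 : ℝ), F'' s + k s * F s = 0)
    (hF0 : F 0 = 0) (hF'0 : F' 0 = 1) :
    ∀ s > (0 : ℝ), 0 < F s ∧ F s ≤ s * F' s :=
  stmt_0_general k F F' F'' hk_nonpos hF' hF'' hODE hF0 hF'0
end

section
/- Let a > 0 and let k : [0, ∞) → ℝ be continuous with k(s) ≤ −a² for all s, and let F be the solution of F'' + kF = 0 with F(0) = 0, F'(0) = 1. Then F'(s) ≥ a·F(s) for all s ≥ 0, and in fact F'(s)/F(s) > a for all s > 0. -/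
open Set Real Filter Topology

/-!
Since `k ≤ -a² ≤ 0`, the equation `F'' = -k F` makes `F'` nondecreasing as long as `F ≥ 0`, and
`F` nondecreasing as long as `F' > 0`; starting from `F(0) = 0`, `F'(0) = 1`, a first-exit argument
shows that `F' > 0` forever, so `F > 0` on `(0, ∞)`. Then `g(s) = e^{as} (F'(s) - a F(s))` has
derivative `e^{as} (-k(s) - a²) F(s) ≥ 0`, hence `F' - a F ≥ e^{-as} g(0) = e^{-as} > 0`.
-/

theorem monotoneOn_of_hasDerivWithinAt_nonneg_of_subset {f f' : ℝ → ℝ} {D s : Set ℝ}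
    (hD : Convex ℝ D) (hDs : D ⊆ s) (hf : ∀ x ∈ s, HasDerivWithinAt f (f' x) s x)
    (hf' : ∀ x ∈ interior D, 0 ≤ f' x) : MonotoneOn f D :=
  monotoneOn_of_hasDerivWithinAt_nonneg hD
    (fun x hx => ((hf x (hDs hx)).mono hDs).continuousWithinAt)
    (fun x hx => (hf x (hDs (interior_subset hx))).mono (interior_subset.trans hDs)) hf'

theorem strictMonoOn_of_hasDerivWithinAt_pos_of_subset {f f' : ℝ → ℝ} {D s : Set ℝ}
    (hD : Convex ℝ D) (hDs : D ⊆ s) (hf : ∀ x ∈ s, HasDerivWithinAt f (f' x) s x)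
    (hf' : ∀ x ∈ interior D, 0 < f' x) : StrictMonoOn f D :=
  strictMonoOn_of_hasDerivWithinAt_pos hD
    (fun x hx => ((hf x (hDs hx)).mono hDs).continuousWithinAt)
    (fun x hx => (hf x (hDs (interior_subset hx))).mono (interior_subset.trans hDs)) hf'

structure IsJacobiSolution (k F F' F'' : ℝ → ℝ) : Prop where
  hasDerivWithinAt : ∀ s ∈ Ici (0 : ℝ), HasDerivWithinAt F (F' s) (Ici 0) s
  hasDerivWithinAt_deriv : ∀ s ∈ Ici (0 : ℝ), HasDerivWithinAt F' (F'' s) (Ici 0) s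
  jacobi : ∀ s ∈ Ici (0 : ℝ), F'' s + k s * F s = 0

namespace IsJacobiSolution

variable {k F F' F'' : ℝ → ℝ}

theorem deriv_pos (h : IsJacobiSolution k F F' F'') (hk : ∀ s ∈ Ici (0 : ℝ), k s ≤ 0)
    (hF0 : 0 ≤ F 0) (hF'0 : 0 < F' 0) : ∀ s ∈ Ici (0 : ℝ), 0 < F' s := by
  by_contra! hbad
  set Z := Ici (0 : ℝ) ∩ F' ⁻¹' Iic 0
  have hZc : IsClosed Z :=
    ContinuousOn.preimage_isClosed_of_isClosed
      (fun x hx => (h.hasDerivWithinAt_deriv x hx).continuousWithinAt) isClosed_Ici isClosed_Iic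
  have hZb : BddBelow Z := ⟨0, fun x hx => hx.1⟩
  -- `t` is the first point where `F'` fails to be positive
  set t := sInf Z
  have htZ : t ∈ Z := hZc.csInf_mem hbad hZb
  have hpos : ∀ s ∈ Ico 0 t, 0 < F' s := fun s hs =>
    lt_of_not_ge fun hle => hs.2.not_ge (csInf_le hZb ⟨hs.1, hle⟩)
  have hFmono : MonotoneOn F (Icc 0 t) :=
    monotoneOn_of_hasDerivWithinAt_nonneg_of_subset (convex_Icc 0 t) Icc_subset_Ici_self
      h.hasDerivWithinAt fun x hx => by
        rw [interior_Icc] at hx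
        exact (hpos x ⟨hx.1.le, hx.2⟩).le
  have hF'mono : MonotoneOn F' (Icc 0 t) :=
    monotoneOn_of_hasDerivWithinAt_nonneg_of_subset (convex_Icc 0 t) Icc_subset_Ici_self
      h.hasDerivWithinAt_deriv fun x hx => by
        rw [interior_Icc] at hx
        have hx0 : x ∈ Ici (0 : ℝ) := hx.1.le
        have hFx : F 0 ≤ F x := hFmono (left_mem_Icc.2 htZ.1) ⟨hx.1.le, hx.2.le⟩ hx.1.le
        nlinarith [h.jacobi x hx0, hk x hx0]
  have ht : F' t ≤ 0 := htZ.2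
  linarith [hF'mono (left_mem_Icc.2 htZ.1) (right_mem_Icc.2 htZ.1) htZ.1]

theorem strictMonoOn (h : IsJacobiSolution k F F' F'') (hk : ∀ s ∈ Ici (0 : ℝ), k s ≤ 0)
    (hF0 : 0 ≤ F 0) (hF'0 : 0 < F' 0) : StrictMonoOn F (Ici 0) :=
  strictMonoOn_of_hasDerivWithinAt_pos_of_subset (convex_Ici 0) subset_rfl h.hasDerivWithinAt
    fun x hx => h.deriv_pos hk hF0 hF'0 x (interior_subset hx)

theorem monotoneOn_exp_mul_deriv_sub (h : IsJacobiSolution k F F' F'') {a : ℝ}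
    (hk : ∀ s ∈ Ici (0 : ℝ), k s ≤ -a ^ 2) (hF : ∀ s ∈ Ici (0 : ℝ), 0 ≤ F s) :
    MonotoneOn (fun s => exp (a * s) * (F' s - a * F s)) (Ici 0) := by
  refine monotoneOn_of_hasDerivWithinAt_nonneg_of_subset (convex_Ici 0) subset_rfl
    (f' := fun s => exp (a * s) * ((-k s - a ^ 2) * F s)) (fun s hs => ?_) fun s hs => ?_
  · have hexp := (((hasDerivAt_id s).const_mul a).exp).hasDerivWithinAt (s := Ici 0)
    refine (hexp.mul ((h.hasDerivWithinAt_deriv s hs).sub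
      ((h.hasDerivWithinAt s hs).const_mul a))).congr_deriv ?_
    simp only [id, mul_one, Pi.sub_apply]
    linear_combination exp (a * s) * h.jacobi s hs
  · have hs0 : s ∈ Ici (0 : ℝ) := interior_subset hs
    exact mul_nonneg (exp_pos _).le (mul_nonneg (by linarith [hk s hs0]) (hF s hs0))

end IsJacobiSolution

theorem stmt_1_general (a : ℝ) (k F F' F'' : ℝ → ℝ)
    (hk_le : ∀ s ∈ Set.Ici (0 : ℝ), k s ≤ -a ^ 2)
    (hF' : ∀ s ∈ Set.Ici (0 : ℝ), HasDerivWithinAt F (F' s) (Set.Ici 0) s)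
    (hF'' : ∀ s ∈ Set.Ici (0 : ℝ), HasDerivWithinAt F' (F'' s) (Set.Ici 0) s)
    (hODE : ∀ s ∈ Set.Ici (0 : ℝ), F'' s + k s * F s = 0)
    (hF0 : F 0 = 0) (hF'0 : F' 0 = 1) :
    (∀ s ∈ Set.Ici (0 : ℝ), a * F s ≤ F' s) ∧ (∀ s > (0 : ℝ), a < F' s / F s) := by
  have h : IsJacobiSolution k F F' F'' := ⟨hF', hF'', hODE⟩
  have hFmono : StrictMonoOn F (Ici 0) :=
    h.strictMonoOn (fun s hs => (hk_le s hs).trans (neg_nonpos.2 (sq_nonneg a)))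
      hF0.ge (hF'0 ▸ one_pos)
  have hFpos : ∀ s > (0 : ℝ), 0 < F s := fun s hs => hF0 ▸ hFmono self_mem_Ici hs.le hs
  have hFnn : ∀ s ∈ Ici (0 : ℝ), 0 ≤ F s := fun s hs =>
    hF0 ▸ hFmono.monotoneOn self_mem_Ici hs hs
  have hgap : ∀ s ∈ Ici (0 : ℝ), 0 < F' s - a * F s := fun s hs => by
    have := h.monotoneOn_exp_mul_deriv_sub hk_le hFnn self_mem_Ici hs hs
    simp only [mul_zero, exp_zero, hF0, hF'0, sub_zero, one_mul] at this
    exact pos_of_mul_pos_right (one_pos.trans_le this) (exp_pos _).le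
  refine ⟨fun s hs => by linarith [hgap s hs], fun s hs => ?_⟩
  rw [lt_div_iff₀ (hFpos s hs)]
  linarith [hgap s hs.le]

/-- Lemma 1 (i), second part: if `k ≤ -a² < 0` then `F' ≥ a F` on `[0,∞)` and
`F'/F > a` on `(0,∞)`. -/
theorem stmt_1 (a : ℝ) (ha : 0 < a) (k F F' F'' : ℝ → ℝ)
    (hk_cont : ContinuousOn k (Set.Ici 0))
    (hk_le : ∀ s ∈ Set.Ici (0 : ℝ), k s ≤ -a ^ 2)
    (hF' : ∀ s ∈ Set.Ici (0 : ℝ), HasDerivWithinAt F (F' s) (Set.Ici 0) s)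
    (hF'' : ∀ s ∈ Set.Ici (0 : ℝ), HasDerivWithinAt F' (F'' s) (Set.Ici 0) s)
    (hF''_cont : ContinuousOn F'' (Set.Ici 0))
    (hODE : ∀ s ∈ Set.Ici (0 : ℝ), F'' s + k s * F s = 0)
    (hF0 : F 0 = 0) (hF'0 : F' 0 = 1) :
    (∀ s ∈ Set.Ici (0 : ℝ), a * F s ≤ F' s) ∧ (∀ s > (0 : ℝ), a < F' s / F s) :=
  stmt_1_general a k F F' F'' hk_le hF' hF'' hODE hF0 hF'0
end

section
/- Let k : [0, ∞) → ℝ be continuous, non-increasing, with k(s) ≤ 0 for all s, let F be the solution of F'' + kF = 0 with F(0) = 0, F'(0) = 1, and set G(s) = ∫₀ˢ F(t) dt. Then the function s ↦ G(s)/(s·F(s)) is non-increasing on (0, ∞). -/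
open Set Topology intervalIntegral MeasureTheory

/-!
Write `ψ(s) = s F'(s) / F(s)`. Since `(G / (sF))' = (sF² - G (F + sF')) / (sF)²`, the claim is
`s F ≤ (1 + ψ) G`. First `(F F')' = F'² - kF² ≥ 0` and `(F'²)' = -2kFF' ≥ 0` give `F' ≥ 1` and
`F(s) ≥ s` without any a priori sign information. Freezing `c = k(s₀)` and using `k ≥ c` on
`[0, s₀]`, the function `F F' - s (F'² + c F²)` is nondecreasing, which at `s₀` is `ψ'(s₀) ≥ 0`.
Finally `(1 + ψ(s₀)) G - s F` has derivative `F (ψ(s₀) - ψ) ≥ 0` on `[0, s₀]`.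
-/

lemma le_of_hasDerivWithinAt_Ici_nonneg {f f' : ℝ → ℝ} {a b : ℝ} (hab : a ≤ b)
    (hf : ∀ x ∈ Icc a b, HasDerivWithinAt f (f' x) (Ici a) x) (hf' : ∀ x ∈ Ico a b, 0 ≤ f' x) :
    f a ≤ f b :=
  image_le_of_deriv_right_le_deriv_boundary (f := fun _ => f a) (f' := fun _ => 0)
    continuousOn_const (fun _ _ => hasDerivWithinAt_const _ _ _) le_rfl
    (fun x hx => (hf x hx).continuousWithinAt.mono Icc_subset_Ici_self)
    (fun x hx => (hf x (Ico_subset_Icc_self hx)).mono (Ici_subset_Ici.2 hx.1)) hf'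
    (right_mem_Icc.2 hab)

lemma hasDerivWithinAt_integral_Ici {f : ℝ → ℝ} {a b : ℝ} (hf : ContinuousOn f (Ici a))
    (hb : a ≤ b) : HasDerivWithinAt (fun u => ∫ t in a..u, f t) (f b) (Ici a) b := by
  have hint : IntervalIntegrable f volume a b :=
    (hf.mono (uIcc_of_le hb ▸ Icc_subset_Ici_self)).intervalIntegrable
  rcases hb.eq_or_lt with rfl | hab
  · exact integral_hasDerivWithinAt_right hint
      ((hf.mono Ioi_subset_Ici_self).stronglyMeasurableAtFilter_nhdsWithin measurableSet_Ioi a)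
      ((hf a self_mem_Ici).mono Ioi_subset_Ici_self)
  · have hn : Ici a ∈ 𝓝 b := Ici_mem_nhds hab
    exact (integral_hasDerivAt_right hint ⟨Ici a, hn, hf.aestronglyMeasurable measurableSet_Ici⟩
      ((hf b hb).continuousAt hn)).hasDerivWithinAt

structure IsJacobiSolution_s2 (k F F' : ℝ → ℝ) : Prop where
  hasDerivWithinAt : ∀ s ∈ Ici (0 : ℝ), HasDerivWithinAt F (F' s) (Ici 0) s
  hasDerivWithinAt_deriv : ∀ s ∈ Ici (0 : ℝ), HasDerivWithinAt F' (-(k s * F s)) (Ici 0) s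
  map_zero : F 0 = 0
  deriv_zero : F' 0 = 1

namespace IsJacobiSolution_s2

variable {k F F' : ℝ → ℝ}

lemma continuousOn (h : IsJacobiSolution_s2 k F F') : ContinuousOn F (Ici 0) :=
  fun s hs => (h.hasDerivWithinAt s hs).continuousWithinAt

lemma continuousOn_deriv (h : IsJacobiSolution_s2 k F F') : ContinuousOn F' (Ici 0) :=
  fun s hs => (h.hasDerivWithinAt_deriv s hs).continuousWithinAt

lemma hasDerivAt (h : IsJacobiSolution_s2 k F F') {s : ℝ} (hs : 0 < s) : HasDerivAt F (F' s) s :=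
  (h.hasDerivWithinAt s hs.le).hasDerivAt (Ici_mem_nhds hs)

lemma hasDerivAt_deriv (h : IsJacobiSolution_s2 k F F') {s : ℝ} (hs : 0 < s) :
    HasDerivAt F' (-(k s * F s)) s :=
  (h.hasDerivWithinAt_deriv s hs.le).hasDerivAt (Ici_mem_nhds hs)

lemma mul_deriv_nonneg (h : IsJacobiSolution_s2 k F F') (hk : ∀ s ∈ Ici (0 : ℝ), k s ≤ 0)
    {s : ℝ} (hs : 0 ≤ s) : 0 ≤ F s * F' s := by
  have key := le_of_hasDerivWithinAt_Ici_nonneg hs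
    (fun x hx => (h.hasDerivWithinAt x hx.1).mul (h.hasDerivWithinAt_deriv x hx.1))
    (fun x hx => by nlinarith [hk x hx.1, sq_nonneg (F x), sq_nonneg (F' x)])
  simpa [h.map_zero] using key

lemma one_le_deriv_sq (h : IsJacobiSolution_s2 k F F') (hk : ∀ s ∈ Ici (0 : ℝ), k s ≤ 0)
    {s : ℝ} (hs : 0 ≤ s) : 1 ≤ F' s ^ 2 := by
  have key := le_of_hasDerivWithinAt_Ici_nonneg hs
    (fun x hx => (h.hasDerivWithinAt_deriv x hx.1).mul (h.hasDerivWithinAt_deriv x hx.1))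
    (fun x hx => by nlinarith [mul_nonneg (neg_nonneg.2 (hk x hx.1)) (h.mul_deriv_nonneg hk hx.1)])
  simpa [h.deriv_zero, sq] using key

lemma one_le_deriv (h : IsJacobiSolution_s2 k F F') (hk : ∀ s ∈ Ici (0 : ℝ), k s ≤ 0)
    {s : ℝ} (hs : 0 ≤ s) : 1 ≤ F' s := by
  by_contra! hlt
  have hneg : F' s ≤ -1 := by
    have := h.one_le_deriv_sq hk hs
    nlinarith
  obtain ⟨y, hy, hy0⟩ : (0 : ℝ) ∈ F' '' Icc 0 s :=
    intermediate_value_Icc' hs (h.continuousOn_deriv.mono Icc_subset_Ici_self)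
      ⟨by linarith, by rw [h.deriv_zero]; norm_num⟩
  have := h.one_le_deriv_sq hk hy.1
  rw [hy0] at this
  norm_num at this

lemma self_le (h : IsJacobiSolution_s2 k F F') (hk : ∀ s ∈ Ici (0 : ℝ), k s ≤ 0)
    {s : ℝ} (hs : 0 ≤ s) : s ≤ F s := by
  have key := le_of_hasDerivWithinAt_Ici_nonneg (f := fun u => F u - u) hs
    (fun x hx => (h.hasDerivWithinAt x hx.1).sub (hasDerivAt_id' x).hasDerivWithinAt)
    (fun x hx => sub_nonneg.2 (h.one_le_deriv hk hx.1))
  simp only [h.map_zero] at key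
  linarith

lemma pos (h : IsJacobiSolution_s2 k F F') (hk : ∀ s ∈ Ici (0 : ℝ), k s ≤ 0)
    {s : ℝ} (hs : 0 < s) : 0 < F s :=
  hs.trans_le (h.self_le hk hs.le)

lemma mul_deriv_sq_add_le (h : IsJacobiSolution_s2 k F F') (hk : ∀ s ∈ Ici (0 : ℝ), k s ≤ 0)
    (hk' : AntitoneOn k (Ici 0)) {s₀ : ℝ} (hs₀ : 0 ≤ s₀) :
    s₀ * (F' s₀ ^ 2 + k s₀ * F s₀ ^ 2) ≤ F s₀ * F' s₀ := by
  set c := k s₀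
  have key := le_of_hasDerivWithinAt_Ici_nonneg
    (f := fun u => F u * F' u - u * (F' u * F' u + c * (F u * F u))) hs₀
    (fun x hx => ((h.hasDerivWithinAt x hx.1).mul (h.hasDerivWithinAt_deriv x hx.1)).sub
      ((hasDerivAt_id' x).hasDerivWithinAt.mul
        (((h.hasDerivWithinAt_deriv x hx.1).mul (h.hasDerivWithinAt_deriv x hx.1)).add
          (((h.hasDerivWithinAt x hx.1).mul (h.hasDerivWithinAt x hx.1)).const_mul c))))
    (fun x hx => by
      have hkx : c ≤ k x := hk' hx.1 hs₀ hx.2.le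
      nlinarith [mul_nonneg (mul_nonneg hx.1 (h.mul_deriv_nonneg hk hx.1)) (sub_nonneg.2 hkx),
        mul_nonneg (neg_nonneg.2 (hk x hx.1)) (sq_nonneg (F x)),
        mul_nonneg (neg_nonneg.2 (hk s₀ hs₀)) (sq_nonneg (F x))])
  simp only [h.map_zero, h.deriv_zero] at key
  linarith

lemma monotoneOn_mul_deriv_div (h : IsJacobiSolution_s2 k F F') (hk : ∀ s ∈ Ici (0 : ℝ), k s ≤ 0)
    (hk' : AntitoneOn k (Ici 0)) : MonotoneOn (fun s => s * F' s / F s) (Ioi 0) := by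
  have hderiv : ∀ s ∈ Ioi (0 : ℝ), HasDerivAt (fun s => s * F' s / F s)
      (((1 * F' s + s * -(k s * F s)) * F s - s * F' s * F' s) / F s ^ 2) s :=
    fun s hs => ((hasDerivAt_id' s).mul (h.hasDerivAt_deriv hs)).div (h.hasDerivAt hs)
      (h.pos hk hs).ne'
  refine monotoneOn_of_hasDerivWithinAt_nonneg (convex_Ioi 0)
    (fun s hs => (hderiv s hs).continuousAt.continuousWithinAt)
    (fun s hs => (hderiv s (interior_subset hs)).hasDerivWithinAt) (fun s hs => ?_)
  rw [interior_Ioi] at hs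
  have := h.mul_deriv_sq_add_le hk hk' hs.le
  exact div_nonneg (by nlinarith) (sq_nonneg _)

lemma mul_le_one_add_mul_integral (h : IsJacobiSolution_s2 k F F')
    (hk : ∀ s ∈ Ici (0 : ℝ), k s ≤ 0) (hk' : AntitoneOn k (Ici 0)) {s : ℝ} (hs : 0 < s) :
    s * F s ≤ (1 + s * F' s / F s) * ∫ t in (0 : ℝ)..s, F t := by
  set p := s * F' s / F s
  have key := le_of_hasDerivWithinAt_Ici_nonneg
    (f := fun u => (1 + p) * (∫ t in (0 : ℝ)..u, F t) - u * F u) hs.le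
    (fun x hx => ((hasDerivWithinAt_integral_Ici h.continuousOn hx.1).const_mul (1 + p)).sub
      ((hasDerivAt_id' x).hasDerivWithinAt.mul (h.hasDerivWithinAt x hx.1)))
    (fun x hx => by
      rcases hx.1.eq_or_lt with rfl | hx₀
      · simp [h.map_zero]
      have hψ : x * F' x / F x ≤ p := h.monotoneOn_mul_deriv_div hk hk' hx₀ hs hx.2.le
      rw [div_le_iff₀ (h.pos hk hx₀)] at hψ
      linarith)
  simp only [integral_same, mul_zero, zero_mul, sub_zero] at key
  linarith

lemma antitoneOn_integral_div_mul (h : IsJacobiSolution_s2 k F F')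
    (hk : ∀ s ∈ Ici (0 : ℝ), k s ≤ 0) (hk' : AntitoneOn k (Ici 0)) :
    AntitoneOn (fun s => (∫ t in (0 : ℝ)..s, F t) / (s * F s)) (Ioi 0) := by
  have hderiv : ∀ s ∈ Ioi (0 : ℝ), HasDerivAt (fun s => (∫ t in (0 : ℝ)..s, F t) / (s * F s))
      ((F s * (s * F s) - (∫ t in (0 : ℝ)..s, F t) * (1 * F s + s * F' s)) / (s * F s) ^ 2) s :=
    fun s hs => (((hasDerivWithinAt_integral_Ici h.continuousOn hs.le).hasDerivAt
      (Ici_mem_nhds hs)).div ((hasDerivAt_id' s).mul (h.hasDerivAt hs))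
      (mul_pos hs (h.pos hk hs)).ne')
  refine antitoneOn_of_hasDerivWithinAt_nonpos (convex_Ioi 0)
    (fun s hs => (hderiv s hs).continuousAt.continuousWithinAt)
    (fun s hs => (hderiv s (interior_subset hs)).hasDerivWithinAt) (fun s hs => ?_)
  rw [interior_Ioi] at hs
  have hF := h.pos hk hs
  have hbound := mul_le_mul_of_nonneg_right (h.mul_le_one_add_mul_integral hk hk' hs) hF.le
  have hψ : s * F' s / F s * F s = s * F' s := div_mul_cancel₀ _ hF.ne'
  refine div_nonpos_of_nonpos_of_nonneg ?_ (sq_nonneg _)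
  linear_combination hbound + (∫ t in (0 : ℝ)..s, F t) * hψ

end IsJacobiSolution_s2

theorem stmt_2_general (k F F' F'' : ℝ → ℝ)
    (hk_nonpos : ∀ s ∈ Set.Ici (0 : ℝ), k s ≤ 0)
    (hk_mono : ∀ s ∈ Set.Ici (0 : ℝ), ∀ t ∈ Set.Ici (0 : ℝ), s ≤ t → k t ≤ k s)
    (hF' : ∀ s ∈ Set.Ici (0 : ℝ), HasDerivWithinAt F (F' s) (Set.Ici 0) s)
    (hF'' : ∀ s ∈ Set.Ici (0 : ℝ), HasDerivWithinAt F' (F'' s) (Set.Ici 0) s)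
    (hODE : ∀ s ∈ Set.Ici (0 : ℝ), F'' s + k s * F s = 0)
    (hF0 : F 0 = 0) (hF'0 : F' 0 = 1)
    (G : ℝ → ℝ) (hG : ∀ s, G s = ∫ t in (0 : ℝ)..s, F t) :
    ∀ s ∈ Set.Ioi (0 : ℝ), ∀ t ∈ Set.Ioi (0 : ℝ), s ≤ t →
      G t / (t * F t) ≤ G s / (s * F s) := by
  have hJ : IsJacobiSolution_s2 k F F' :=
    ⟨hF', fun s hs => (hF'' s hs).congr_deriv (by linarith [hODE s hs]), hF0, hF'0⟩
  obtain rfl : G = fun s => ∫ t in (0 : ℝ)..s, F t := funext hG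
  exact fun s hs t ht hst => hJ.antitoneOn_integral_div_mul hk_nonpos hk_mono hs ht hst

/-- Lemma 1 (ii): if `k ≤ 0` is continuous and non-increasing and `F` solves
`F'' + kF = 0`, `F(0)=0`, `F'(0)=1`, and `G(s) = ∫₀ˢ F`, then `s ↦ G(s)/(s F(s))` is
non-increasing on `(0, ∞)`. -/
theorem stmt_2 (k F F' F'' : ℝ → ℝ)
    (hk_cont : ContinuousOn k (Set.Ici 0))
    (hk_nonpos : ∀ s ∈ Set.Ici (0 : ℝ), k s ≤ 0)
    (hk_mono : ∀ s ∈ Set.Ici (0 : ℝ), ∀ t ∈ Set.Ici (0 : ℝ), s ≤ t → k t ≤ k s)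
    (hF' : ∀ s ∈ Set.Ici (0 : ℝ), HasDerivWithinAt F (F' s) (Set.Ici 0) s)
    (hF'' : ∀ s ∈ Set.Ici (0 : ℝ), HasDerivWithinAt F' (F'' s) (Set.Ici 0) s)
    (hF''_cont : ContinuousOn F'' (Set.Ici 0))
    (hODE : ∀ s ∈ Set.Ici (0 : ℝ), F'' s + k s * F s = 0)
    (hF0 : F 0 = 0) (hF'0 : F' 0 = 1)
    (G : ℝ → ℝ) (hG : ∀ s, G s = ∫ t in (0 : ℝ)..s, F t) :
    ∀ s ∈ Set.Ioi (0 : ℝ), ∀ t ∈ Set.Ioi (0 : ℝ), s ≤ t →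
      G t / (t * F t) ≤ G s / (s * F s) :=
  stmt_2_general k F F' F'' hk_nonpos hk_mono hF' hF'' hODE hF0 hF'0 G hG
end

section
/- Let k : [0, ∞) → ℝ be continuous, non-increasing, with k(s) ≤ 0 for all s, let F be the solution of F'' + kF = 0, F(0) = 0, F'(0) = 1, and set G(s) = ∫₀ˢ F(t) dt. Then for every s ≥ 0 one has F'(s) + k(s)·G(s) ≤ 1, i.e. G''(s) + k(s)G(s) ≤ 1. -/
open Set Real Filter Topology intervalIntegral

/-- If `k ≤ 0` is continuous and non-increasing and `F` solves `F'' + kF = 0`,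
`F(0)=0`, `F'(0)=1`, with `G(s) = ∫₀ˢ F`, then `G''(s) + k(s)G(s) = F'(s) + k(s)G(s) ≤ 1`
for all `s ≥ 0`. -/
theorem stmt_6 (k F F' F'' : ℝ → ℝ)
    (hk_cont : ContinuousOn k (Set.Ici 0))
    (hk_nonpos : ∀ s ∈ Set.Ici (0 : ℝ), k s ≤ 0)
    (hk_mono : ∀ s ∈ Set.Ici (0 : ℝ), ∀ t ∈ Set.Ici (0 : ℝ), s ≤ t → k t ≤ k s)
    (hF' : ∀ s ∈ Set.Ici (0 : ℝ), HasDerivWithinAt F (F' s) (Set.Ici 0) s)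
    (hF'' : ∀ s ∈ Set.Ici (0 : ℝ), HasDerivWithinAt F' (F'' s) (Set.Ici 0) s)
    (hF''_cont : ContinuousOn F'' (Set.Ici 0))
    (hODE : ∀ s ∈ Set.Ici (0 : ℝ), F'' s + k s * F s = 0)
    (hF0 : F 0 = 0) (hF'0 : F' 0 = 1)
    (G : ℝ → ℝ) (hG : ∀ s, G s = ∫ t in (0 : ℝ)..s, F t) :
    ∀ s ∈ Set.Ici (0 : ℝ), F' s + k s * G s ≤ 1 := by
  have hFc : ContinuousOn F (Set.Ici 0) := fun x hx => (hF' x hx).continuousWithinAt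
  have hF'c : ContinuousOn F' (Set.Ici 0) := fun x hx => (hF'' x hx).continuousWithinAt
  -- FTC for F
  have ftcF : ∀ s ∈ Set.Ici (0 : ℝ), (∫ t in (0:ℝ)..s, F' t) = F s := by
    intro s hs
    have h := intervalIntegral.integral_eq_sub_of_hasDeriv_right_of_le hs
      (hFc.mono (Icc_subset_Ici_self))
      (fun x hx => (hF' x (le_of_lt hx.1)).mono (fun y hy => le_trans hx.1.le (le_of_lt hy)))
      ((hF'c.mono (by rw [uIcc_of_le hs]; exact Icc_subset_Ici_self)).intervalIntegrable)
    rw [h, hF0, sub_zero]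
  -- FTC for F'
  have ftcF' : ∀ s ∈ Set.Ici (0 : ℝ), (∫ t in (0:ℝ)..s, F'' t) = F' s - 1 := by
    intro s hs
    have h := intervalIntegral.integral_eq_sub_of_hasDeriv_right_of_le hs
      (hF'c.mono (Icc_subset_Ici_self))
      (fun x hx => (hF'' x (le_of_lt hx.1)).mono (fun y hy => le_trans hx.1.le (le_of_lt hy)))
      ((hF''_cont.mono (by rw [uIcc_of_le hs]; exact Icc_subset_Ici_self)).intervalIntegrable)
    rw [h, hF'0]
  -- F is nonnegative on [0, ∞)
  have hFnonneg : ∀ s ∈ Set.Ici (0 : ℝ), 0 ≤ F s := by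
    by_contra h
    push_neg at h
    obtain ⟨b, hb, hFb⟩ := h
    set T := {x | x ∈ Set.Icc (0:ℝ) b ∧ F x < 0} with hT
    have hTne : T.Nonempty := ⟨b, ⟨⟨hb, le_refl b⟩, hFb⟩⟩
    have hTbd : BddBelow T := ⟨0, fun x hx => hx.1.1⟩
    set c := sInf T with hc
    have hc0 : 0 ≤ c := le_csInf hTne (fun x hx => hx.1.1)
    have hcb : c ≤ b := csInf_le hTbd ⟨⟨hb, le_refl b⟩, hFb⟩
    -- F positive just to the right of 0
    have hslope : Filter.Tendsto (slope F 0) (nhdsWithin 0 (Set.Ici 0 \ {0})) (nhds 1) := by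
      have := (hasDerivWithinAt_iff_tendsto_slope).1 (hF' 0 (Set.mem_Ici.mpr le_rfl))
      rwa [hF'0] at this
    have hpos : ∀ᶠ x in nhdsWithin 0 (Set.Ici 0 \ {0}), 0 < F x := by
      filter_upwards [hslope.eventually (eventually_gt_nhds (by norm_num : (0:ℝ) < 1)),
        self_mem_nhdsWithin] with x hx hx'
      have hx0 : 0 < x := lt_of_le_of_ne hx'.1 (fun h => hx'.2 h.symm)
      have h2 : 0 < F x / x := by
        rw [slope_def_field, hF0, sub_zero, sub_zero] at hx
        exact hx
      have h3 := mul_pos h2 hx0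
      rwa [div_mul_cancel₀ (F x) (ne_of_gt hx0)] at h3
    -- c is positive
    have hc_pos : 0 < c := by
      rw [eventually_nhdsWithin_iff] at hpos
      obtain ⟨δ, hδ, hδpos⟩ := Metric.eventually_nhds_iff.mp hpos
      have : ∀ x ∈ T, δ ≤ x := by
        intro x hx
        by_contra hxδ
        push_neg at hxδ
        have hx0 : 0 ≤ x := hx.1.1
        rcases eq_or_lt_of_le hx0 with h0 | h0
        · have hx2 := hx.2
          rw [← h0, hF0] at hx2; exact absurd hx2 (lt_irrefl 0)
        · have : 0 < F x := hδpos (by simpa [abs_of_nonneg hx0] using hxδ)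
            ⟨hx0, fun h => absurd h.symm (ne_of_gt h0).symm⟩
          exact absurd hx.2 (not_lt.mpr this.le)
      exact lt_of_lt_of_le hδ (le_csInf hTne this)
    -- F ≥ 0 on [0, c)
    have hF_lt : ∀ x, 0 ≤ x → x < c → 0 ≤ F x := by
      intro x hx0 hxc
      by_contra hFx
      push_neg at hFx
      exact absurd (csInf_le hTbd ⟨⟨hx0, le_trans hxc.le hcb⟩, hFx⟩) (not_le.mpr hxc)
    -- F c ≥ 0 by continuity from the left
    have hFc_nonneg : 0 ≤ F c := by
      have hmem : c ∈ closure (Set.Ico 0 c) := by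
        rw [closure_Ico (ne_of_lt hc_pos)]
        exact ⟨hc0, le_refl c⟩
      have htend : Filter.Tendsto F (nhdsWithin c (Set.Ico 0 c)) (nhds (F c)) :=
        ((hFc c hc0).mono (fun y hy => hy.1)).tendsto
      have : (nhdsWithin c (Set.Ico 0 c)).NeBot := mem_closure_iff_nhdsWithin_neBot.mp hmem
      refine ge_of_tendsto htend ?_
      filter_upwards [self_mem_nhdsWithin] with y hy
      exact hF_lt y hy.1 hy.2
    -- F ≥ 0 on [0, c]
    have hF_le : ∀ x ∈ Set.Icc (0:ℝ) c, 0 ≤ F x := by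
      intro x hx
      rcases eq_or_lt_of_le hx.2 with h | h
      · rw [h]; exact hFc_nonneg
      · exact hF_lt x hx.1 h
    -- F'' ≥ 0 on [0, c], hence F' ≥ 1 on [0, c]
    have hF'_ge : ∀ x ∈ Set.Icc (0:ℝ) c, 1 ≤ F' x := by
      intro x hx
      have hint : 0 ≤ ∫ t in (0:ℝ)..x, F'' t := by
        apply intervalIntegral.integral_nonneg hx.1
        intro u hu
        have hu' : u ∈ Set.Icc (0:ℝ) c := ⟨hu.1, le_trans hu.2 hx.2⟩
        have hFu := hF_le u hu'
        have hku := hk_nonpos u hu.1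
        have := hODE u hu.1
        nlinarith [mul_nonneg (neg_nonneg.mpr hku) hFu]
      have := ftcF' x hx.1
      linarith
    -- hence F c ≥ c > 0
    have hFc_ge : c ≤ F c := by
      have h1 : (∫ t in (0:ℝ)..c, (1:ℝ)) ≤ ∫ t in (0:ℝ)..c, F' t := by
        apply intervalIntegral.integral_mono_on hc0
        · exact intervalIntegrable_const
        · exact (hF'c.mono (by rw [uIcc_of_le hc0]; exact Icc_subset_Ici_self)).intervalIntegrable
        · exact hF'_ge
      rw [ftcF c hc0] at h1
      simpa using h1
    -- F c ≤ 0 by continuity from T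
    have hFc_le : F c ≤ 0 := by
      have hmem : c ∈ closure T := csInf_mem_closure hTne hTbd
      have : (nhdsWithin c T).NeBot := mem_closure_iff_nhdsWithin_neBot.mp hmem
      have htend : Filter.Tendsto F (nhdsWithin c T) (nhds (F c)) :=
        ((hFc c hc0).mono (fun y hy => hy.1.1)).tendsto
      refine le_of_tendsto htend ?_
      filter_upwards [self_mem_nhdsWithin] with y hy
      exact hy.2.le
    linarith
  -- Main conclusion
  intro s hs
  have hintF : IntervalIntegrable F MeasureTheory.volume 0 s :=
    (hFc.mono (by rw [uIcc_of_le hs]; exact Icc_subset_Ici_self)).intervalIntegrable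
  have hintF'' : IntervalIntegrable F'' MeasureTheory.volume 0 s :=
    (hF''_cont.mono (by rw [uIcc_of_le hs]; exact Icc_subset_Ici_self)).intervalIntegrable
  have hintkF : IntervalIntegrable (fun t => k s * F t) MeasureTheory.volume 0 s :=
    hintF.const_mul _
  have hsum : F' s + k s * G s - 1 = ∫ t in (0:ℝ)..s, (F'' t + k s * F t) := by
    rw [intervalIntegral.integral_add hintF'' hintkF, ftcF' s hs,
      intervalIntegral.integral_const_mul, hG s]
    ring
  have hbound : (∫ t in (0:ℝ)..s, (F'' t + k s * F t)) ≤ 0 := by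
    have h : (∫ t in (0:ℝ)..s, (F'' t + k s * F t)) ≤ ∫ _t in (0:ℝ)..s, (0:ℝ) := by
      apply intervalIntegral.integral_mono_on hs (hintF''.add hintkF) intervalIntegrable_const
      intro u hu
      have hu0 : (0:ℝ) ≤ u := hu.1
      have hFu := hFnonneg u hu0
      have hks : k s ≤ k u := hk_mono u hu0 s hs hu.2
      have hode := hODE u hu0
      nlinarith [mul_le_mul_of_nonneg_right hks hFu]
    simpa using h
  linarith
end

section
/- Let k₀ : [0, ∞) → ℝ be continuous, non-increasing, with k₀(s) < 0 for all s, and let F₀ be the solution of F₀'' + k₀F₀ = 0 with F₀(0) = 0, F₀'(0) = 1. Then for all 0 ≤ t ≤ s one has F₀(s) ≥ F₀(t)·cosh(√(−k₀(t))·(s − t)). -/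
/-!
Write `q = -k₀ ≥ 0`, so that `F₀'' = q F₀`. Then `(F₀ F₀')' = F₀'² + q F₀² ≥ 0` and
`(F₀'²)' = 2 q F₀ F₀' ≥ 0`, so `F₀'²` never drops below `F₀'(0)² = 1`; hence `F₀' > 0` and
`F₀ ≥ 0` on `[0, ∞)`. For `t ≥ 0` put `c = √(-k₀ t)` and `g(u) = cosh (c (u - t))`, a solution of
`g'' = c² g` with `g(t) = 1`, `g'(t) = 0`. Since `k₀` is non-increasing, `q ≥ c²` on `[t, ∞)`, so
the Wronskian `F₀' g - F₀ g'` is non-decreasing there and starts at `F₀'(t) > 0`. Therefore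
`F₀ / g` is non-decreasing on `[t, ∞)`, which is the claim.
-/

open Set Real

theorem monotoneOn_Ici_of_hasDerivWithinAt_nonneg {f f' : ℝ → ℝ} {a : ℝ}
    (hf : ∀ x ∈ Ici a, HasDerivWithinAt f (f' x) (Ici a) x) (hf' : ∀ x ∈ Ici a, 0 ≤ f' x) :
    MonotoneOn f (Ici a) := by
  refine monotoneOn_of_hasDerivWithinAt_nonneg (convex_Ici a)
    (fun x hx => (hf x hx).continuousWithinAt) (fun x hx => ?_)
    fun x hx => hf' x (interior_subset hx)
  rw [interior_Ici] at hx ⊢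
  exact (hf x (mem_Ici.2 hx.le)).mono Ioi_subset_Ici_self

section JacobiEquation

variable {F F' F'' q : ℝ → ℝ} {a : ℝ}

theorem monotoneOn_mul_deriv_of_jacobi
    (hF : ∀ x ∈ Ici a, HasDerivWithinAt F (F' x) (Ici a) x)
    (hF' : ∀ x ∈ Ici a, HasDerivWithinAt F' (F'' x) (Ici a) x)
    (hq : ∀ x ∈ Ici a, 0 ≤ q x) (hODE : ∀ x ∈ Ici a, F'' x = q x * F x) :
    MonotoneOn (fun x => F x * F' x) (Ici a) := by
  refine monotoneOn_Ici_of_hasDerivWithinAt_nonneg (fun x hx => (hF x hx).mul (hF' x hx))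
    fun x hx => ?_
  rw [hODE x hx]
  nlinarith [mul_nonneg (hq x hx) (mul_self_nonneg (F x)), mul_self_nonneg (F' x)]

theorem monotoneOn_deriv_sq_of_jacobi
    (hF : ∀ x ∈ Ici a, HasDerivWithinAt F (F' x) (Ici a) x)
    (hF' : ∀ x ∈ Ici a, HasDerivWithinAt F' (F'' x) (Ici a) x)
    (hq : ∀ x ∈ Ici a, 0 ≤ q x) (hODE : ∀ x ∈ Ici a, F'' x = q x * F x)
    (ha : 0 ≤ F a * F' a) :
    MonotoneOn (fun x => F' x ^ 2) (Ici a) := by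
  have hFF' : ∀ x ∈ Ici a, 0 ≤ F x * F' x := fun x hx =>
    ha.trans (monotoneOn_mul_deriv_of_jacobi hF hF' hq hODE self_mem_Ici hx hx)
  refine monotoneOn_Ici_of_hasDerivWithinAt_nonneg (fun x hx => (hF' x hx).pow 2) fun x hx => ?_
  rw [hODE x hx, Nat.cast_ofNat, Nat.add_one_sub_one, pow_one]
  nlinarith [mul_nonneg (hq x hx) (hFF' x hx)]

theorem deriv_pos_of_jacobi_s9
    (hF : ∀ x ∈ Ici a, HasDerivWithinAt F (F' x) (Ici a) x)
    (hF' : ∀ x ∈ Ici a, HasDerivWithinAt F' (F'' x) (Ici a) x)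
    (hq : ∀ x ∈ Ici a, 0 ≤ q x) (hODE : ∀ x ∈ Ici a, F'' x = q x * F x)
    (ha : 0 ≤ F a * F' a) (ha' : 0 < F' a) :
    ∀ x ∈ Ici a, 0 < F' x := by
  intro x hx
  by_contra! hx'
  obtain ⟨y, hy, hy0⟩ : ∃ y ∈ Ici a, F' y = 0 :=
    isPreconnected_Ici.intermediate_value hx self_mem_Ici
      (fun z hz => (hF' z hz).continuousWithinAt) ⟨hx', ha'.le⟩
  have hsq := monotoneOn_deriv_sq_of_jacobi hF hF' hq hODE ha self_mem_Ici hy hy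
  simp only [hy0] at hsq
  nlinarith

theorem nonneg_of_jacobi
    (hF : ∀ x ∈ Ici a, HasDerivWithinAt F (F' x) (Ici a) x)
    (hF' : ∀ x ∈ Ici a, HasDerivWithinAt F' (F'' x) (Ici a) x)
    (hq : ∀ x ∈ Ici a, 0 ≤ q x) (hODE : ∀ x ∈ Ici a, F'' x = q x * F x)
    (ha : 0 ≤ F a) (ha' : 0 < F' a) :
    ∀ x ∈ Ici a, 0 ≤ F x := by
  have hmono : MonotoneOn F (Ici a) := monotoneOn_Ici_of_hasDerivWithinAt_nonneg hF fun x hx =>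
    (deriv_pos_of_jacobi_s9 hF hF' hq hODE (mul_nonneg ha ha'.le) ha' x hx).le
  exact fun x hx => ha.trans (hmono self_mem_Ici hx hx)

/-- Sturm comparison: the Wronskian `F' G - F G'` has derivative `(q - r) F G ≥ 0`. -/
theorem monotoneOn_div_of_jacobi_le {G G' G'' r : ℝ → ℝ}
    (hF : ∀ x ∈ Ici a, HasDerivWithinAt F (F' x) (Ici a) x)
    (hF' : ∀ x ∈ Ici a, HasDerivWithinAt F' (F'' x) (Ici a) x)
    (hG : ∀ x ∈ Ici a, HasDerivWithinAt G (G' x) (Ici a) x)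
    (hG' : ∀ x ∈ Ici a, HasDerivWithinAt G' (G'' x) (Ici a) x)
    (hFODE : ∀ x ∈ Ici a, F'' x = q x * F x) (hGODE : ∀ x ∈ Ici a, G'' x = r x * G x)
    (hrq : ∀ x ∈ Ici a, r x ≤ q x) (hF0 : ∀ x ∈ Ici a, 0 ≤ F x) (hG0 : ∀ x ∈ Ici a, 0 < G x)
    (hW : 0 ≤ F' a * G a - F a * G' a) :
    MonotoneOn (fun x => F x / G x) (Ici a) := by
  have hWmono : MonotoneOn (fun x => F' x * G x - F x * G' x) (Ici a) := by
    refine monotoneOn_Ici_of_hasDerivWithinAt_nonneg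
      (fun x hx => ((hF' x hx).mul (hG x hx)).sub ((hF x hx).mul (hG' x hx))) fun x hx => ?_
    rw [hFODE x hx, hGODE x hx]
    nlinarith [mul_nonneg (sub_nonneg.2 (hrq x hx)) (mul_nonneg (hF0 x hx) (hG0 x hx).le)]
  refine monotoneOn_Ici_of_hasDerivWithinAt_nonneg
    (fun x hx => (hF x hx).div (hG x hx) (hG0 x hx).ne') fun x hx => ?_
  exact div_nonneg (hW.trans (hWmono self_mem_Ici hx hx)) (sq_nonneg _)

end JacobiEquation

theorem stmt_9_general (k₀ F₀ F₀' F₀'' : ℝ → ℝ)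
    (hk₀_neg : ∀ s ∈ Set.Ici (0 : ℝ), k₀ s < 0)
    (hk₀_mono : ∀ s ∈ Set.Ici (0 : ℝ), ∀ t ∈ Set.Ici (0 : ℝ), s ≤ t → k₀ t ≤ k₀ s)
    (hF₀' : ∀ s ∈ Set.Ici (0 : ℝ), HasDerivWithinAt F₀ (F₀' s) (Set.Ici 0) s)
    (hF₀'' : ∀ s ∈ Set.Ici (0 : ℝ), HasDerivWithinAt F₀' (F₀'' s) (Set.Ici 0) s)
    (hODE₀ : ∀ s ∈ Set.Ici (0 : ℝ), F₀'' s + k₀ s * F₀ s = 0)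
    (hF₀0 : F₀ 0 = 0) (hF₀'0 : F₀' 0 = 1) :
    ∀ t ∈ Set.Ici (0 : ℝ), ∀ s, t ≤ s →
      F₀ t * Real.cosh (Real.sqrt (-(k₀ t)) * (s - t)) ≤ F₀ s := by
  have hq : ∀ s ∈ Ici (0 : ℝ), 0 ≤ -k₀ s := fun s hs => by linarith [hk₀_neg s hs]
  have hODE : ∀ s ∈ Ici (0 : ℝ), F₀'' s = -k₀ s * F₀ s := fun s hs => by linarith [hODE₀ s hs]
  have hF₀'_pos := deriv_pos_of_jacobi_s9 hF₀' hF₀'' hq hODE (by simp [hF₀0]) (by simp [hF₀'0])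
  have hF₀_nonneg := nonneg_of_jacobi hF₀' hF₀'' hq hODE hF₀0.ge (by simp [hF₀'0])
  intro t ht s hts
  set c := √(-k₀ t)
  have hsub : Ici t ⊆ Ici 0 := Ici_subset_Ici.2 ht
  have hlin (u : ℝ) : HasDerivAt (fun u => c * (u - t)) c u := by
    simpa using ((hasDerivAt_id u).sub_const t).const_mul c
  have hmono := monotoneOn_div_of_jacobi_le (q := fun u => -k₀ u) (r := fun _ => c ^ 2)
    (G := fun u => cosh (c * (u - t))) (G' := fun u => sinh (c * (u - t)) * c)
    (G'' := fun u => c ^ 2 * cosh (c * (u - t)))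
    (fun u hu => (hF₀' u (hsub hu)).mono hsub) (fun u hu => (hF₀'' u (hsub hu)).mono hsub)
    (fun u _ => (hlin u).cosh.hasDerivWithinAt)
    (fun u _ => ((hlin u).sinh.mul_const c).hasDerivWithinAt.congr_deriv (by ring))
    (fun u hu => hODE u (hsub hu)) (fun _ _ => rfl)
    (fun u hu => by simpa [c, sq_sqrt (hq t ht)] using hk₀_mono t ht u (hsub hu) hu)
    (fun u hu => hF₀_nonneg u (hsub hu)) (fun _ _ => cosh_pos _)
    (by simpa using (hF₀'_pos t ht).le)
  simpa [le_div_iff₀ (cosh_pos _)] using hmono self_mem_Ici hts hts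

/-- Growth estimate in the proof of Lemma 1 (iii): if `k₀ < 0` is continuous and
non-increasing and `F₀` solves `F₀'' + k₀F₀ = 0`, `F₀(0)=0`, `F₀'(0)=1`, then for
`0 ≤ t ≤ s` one has `F₀(s) ≥ F₀(t) cosh(√(-k₀(t)) (s - t))`. -/
theorem stmt_9 (k₀ F₀ F₀' F₀'' : ℝ → ℝ)
    (hk₀_cont : ContinuousOn k₀ (Set.Ici 0))
    (hk₀_neg : ∀ s ∈ Set.Ici (0 : ℝ), k₀ s < 0)
    (hk₀_mono : ∀ s ∈ Set.Ici (0 : ℝ), ∀ t ∈ Set.Ici (0 : ℝ), s ≤ t → k₀ t ≤ k₀ s)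
    (hF₀' : ∀ s ∈ Set.Ici (0 : ℝ), HasDerivWithinAt F₀ (F₀' s) (Set.Ici 0) s)
    (hF₀'' : ∀ s ∈ Set.Ici (0 : ℝ), HasDerivWithinAt F₀' (F₀'' s) (Set.Ici 0) s)
    (hF₀''_cont : ContinuousOn F₀'' (Set.Ici 0))
    (hODE₀ : ∀ s ∈ Set.Ici (0 : ℝ), F₀'' s + k₀ s * F₀ s = 0)
    (hF₀0 : F₀ 0 = 0) (hF₀'0 : F₀' 0 = 1) :
    ∀ t ∈ Set.Ici (0 : ℝ), ∀ s, t ≤ s →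
      F₀ t * Real.cosh (Real.sqrt (-(k₀ t)) * (s - t)) ≤ F₀ s :=
  stmt_9_general k₀ F₀ F₀' F₀'' hk₀_neg hk₀_mono hF₀' hF₀'' hODE₀ hF₀0 hF₀'0
end
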